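/- arXiv:2405.02440 — 6 statements merged into one kernel-verified Lean document; each statement's English description precedes it below -/
import Mathlib

section
/- Let K, L ⊆ ℝⁿ be convex bodies with centroid at the origin, and let λ₁, λ₂ > 0 satisfy (1/λ₁)·K ⊆ L ⊆ λ₂·K. Then the Binet–Legendre ellipsoids satisfy E(K) ⊆ λ₁^{(n+2)/2}·λ₂^{n/2}·E(L) and E(L) ⊆ λ₁^{n/2}·λ₂^{(n+2)/2}·E(K). -/
open Set Metric Pointwise MeasureTheory

/-- The centroid (center of mass) of a set `K ⊆ ℝⁿ`. -/
noncomputable def centroid {n : ℕ} (K : Set (EuclideanSpace ℝ (Fin n))) :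
    EuclideanSpace ℝ (Fin n) :=
  (volume K).toReal⁻¹ • ∫ x in K, x

/-- The Binet–Legendre ellipsoid of a centered convex body `K ⊆ ℝⁿ`: the polar of
the unit ball of the inner product `⟨φ, ψ⟩_K = ((n+2)/vol K) ∫_K φ ψ` on the dual. -/
def binetLegendre {n : ℕ} (K : Set (EuclideanSpace ℝ (Fin n))) :
    Set (EuclideanSpace ℝ (Fin n)) :=
  {x | ∀ φ : EuclideanSpace ℝ (Fin n) →ₗ[ℝ] ℝ,
    ((n : ℝ) + 2) / (volume K).toReal * ∫ y in K, (φ y) ^ 2 ≤ 1 → φ x ≤ 1}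

/-!
Write `Q_K(φ) = (n + 2) ⨍_K φ²`, so that `E(K)` is the polar of `{φ | Q_K(φ) ≤ 1}`.
If `a⁻¹ • M ⊆ N ⊆ b • M`, then `∫_N φ² ≤ ∫_{b • M} φ² = b^(n+2) ∫_M φ²` because `φ²` is
`2`-homogeneous, while `vol N ≥ a^(-n) vol M`; hence `Q_N ≤ a^n b^(n+2) Q_M`. Since `Q` is
quadratic, the polars satisfy `E(N) ⊆ (a^n b^(n+2))^(1/2) • E(M)`. Both inclusions are this
estimate, applied to `(K, L, λ₁, λ₂)` and to `(L, K, λ₂, λ₁)`.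
-/

open Module

section SecondMoment

variable {E : Type*} [NormedAddCommGroup E] [NormedSpace ℝ E] [FiniteDimensional ℝ E]
  [MeasurableSpace E] [BorelSpace E] (μ : Measure E) [μ.IsAddHaarMeasure]

theorem setIntegral_sq_smul_set (φ : E →ₗ[ℝ] ℝ) (s : Set E) {R : ℝ} (hR : 0 < R) :
    ∫ x in R • s, φ x ^ 2 ∂μ = R ^ (finrank ℝ E + 2) * ∫ x in s, φ x ^ 2 ∂μ := by
  have h := Measure.setIntegral_comp_smul_of_pos μ (fun x => φ x ^ 2) s hR
  simp only [map_smul, smul_eq_mul, mul_pow, integral_const_mul] at h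
  have hRd : R ^ finrank ℝ E ≠ 0 := pow_ne_zero _ hR.ne'
  rw [pow_add, mul_assoc, h]
  field_simp

theorem setIntegral_sq_le_of_subset_smul {M N : Set E} (hM : IsCompact M) {b : ℝ} (hb : 0 < b)
    (hNM : N ⊆ b • M) (φ : E →ₗ[ℝ] ℝ) :
    ∫ x in N, φ x ^ 2 ∂μ ≤ b ^ (finrank ℝ E + 2) * ∫ x in M, φ x ^ 2 ∂μ := by
  have hcont : Continuous fun x => φ x ^ 2 := (φ.continuous_of_finiteDimensional).pow 2
  rw [← setIntegral_sq_smul_set μ φ M hb]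
  exact setIntegral_mono_set (hcont.continuousOn.integrableOn_compact (hM.smul b))
    (Filter.Eventually.of_forall fun _ => sq_nonneg _) hNM.eventuallyLE

theorem setAverage_sq_le_of_subset_smul {M N : Set E} (hM : IsCompact M)
    (hM' : (interior M).Nonempty) {a b : ℝ} (ha : 0 < a) (hb : 0 < b)
    (hMN : a⁻¹ • M ⊆ N) (hNM : N ⊆ b • M) (φ : E →ₗ[ℝ] ℝ) :
    ⨍ x in N, φ x ^ 2 ∂μ ≤ a ^ finrank ℝ E * b ^ (finrank ℝ E + 2) * ⨍ x in M, φ x ^ 2 ∂μ := by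
  have hvolM : 0 < (μ M).toReal := ENNReal.toReal_pos
    ((isOpen_interior.measure_pos μ hM').trans_le (measure_mono interior_subset)).ne'
    hM.measure_lt_top.ne
  have hvolN : a⁻¹ ^ finrank ℝ E * (μ M).toReal ≤ (μ N).toReal := by
    have hN_fin : μ N ≠ ⊤ := (measure_mono hNM).trans_lt (hM.smul b).measure_lt_top |>.ne
    have := ENNReal.toReal_mono hN_fin (measure_mono (μ := μ) hMN)
    rwa [Measure.addHaar_smul_of_nonneg μ (by positivity), ENNReal.toReal_mul,
      ENNReal.toReal_ofReal (by positivity)] at this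
  have hint := setIntegral_sq_le_of_subset_smul μ hM hb hNM φ
  rw [setAverage_eq, setAverage_eq, smul_eq_mul, smul_eq_mul]
  calc (μ N).toReal⁻¹ * ∫ x in N, φ x ^ 2 ∂μ
      ≤ (a⁻¹ ^ finrank ℝ E * (μ M).toReal)⁻¹ * (b ^ (finrank ℝ E + 2) * ∫ x in M, φ x ^ 2 ∂μ) :=
        mul_le_mul (inv_anti₀ (by positivity) hvolN) hint
          (integral_nonneg fun _ => sq_nonneg _) (by positivity)
    _ = a ^ finrank ℝ E * b ^ (finrank ℝ E + 2) * ((μ M).toReal⁻¹ * ∫ x in M, φ x ^ 2 ∂μ) := by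
        rw [mul_inv, inv_pow, inv_inv]
        ring

end SecondMoment

theorem binetLegendre_eq_setAverage {n : ℕ} (K : Set (EuclideanSpace ℝ (Fin n))) :
    binetLegendre K = {x | ∀ φ : EuclideanSpace ℝ (Fin n) →ₗ[ℝ] ℝ,
      ((n : ℝ) + 2) * ⨍ y in K, φ y ^ 2 ≤ 1 → φ x ≤ 1} := by
  simp only [binetLegendre, setAverage_eq, smul_eq_mul, measureReal_def, div_eq_mul_inv, mul_assoc]

theorem binetLegendre_subset_smul_of_setAverage_le {n : ℕ} {M N : Set (EuclideanSpace ℝ (Fin n))}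
    {c : ℝ} (hc : 0 < c)
    (hQ : ∀ φ : EuclideanSpace ℝ (Fin n) →ₗ[ℝ] ℝ,
      ⨍ y in N, φ y ^ 2 ≤ c ^ 2 * ⨍ y in M, φ y ^ 2) :
    binetLegendre N ⊆ c • binetLegendre M := by
  rw [binetLegendre_eq_setAverage, binetLegendre_eq_setAverage]
  intro x hx
  rw [mem_smul_set_iff_inv_smul_mem₀ hc.ne']
  intro φ hφ
  have hcφ : ((n : ℝ) + 2) * ⨍ y in N, (c⁻¹ • φ) y ^ 2 ≤ 1 := by
    have hQφ := hQ φ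
    calc ((n : ℝ) + 2) * ⨍ y in N, (c⁻¹ • φ) y ^ 2
        = c⁻¹ ^ 2 * (((n : ℝ) + 2) * ⨍ y in N, φ y ^ 2) := by
          simp only [LinearMap.smul_apply, smul_eq_mul, mul_pow, setAverage_eq,
            integral_const_mul]
          ring
      _ ≤ c⁻¹ ^ 2 * (((n : ℝ) + 2) * (c ^ 2 * ⨍ y in M, φ y ^ 2)) := by gcongr
      _ = ((n : ℝ) + 2) * ⨍ y in M, φ y ^ 2 := by field_simp
      _ ≤ 1 := hφ
  simpa using hx _ hcφ

theorem rpow_div_two_sq {x : ℝ} (hx : 0 ≤ x) (e : ℝ) : (x ^ (e / 2)) ^ 2 = x ^ e := by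
  rw [← Real.rpow_natCast, ← Real.rpow_mul hx]
  norm_num

theorem binetLegendre_subset_smul_of_subset {n : ℕ} {M N : Set (EuclideanSpace ℝ (Fin n))}
    (hM : IsCompact M) (hM' : (interior M).Nonempty) {a b : ℝ} (ha : 0 < a) (hb : 0 < b)
    (hMN : a⁻¹ • M ⊆ N) (hNM : N ⊆ b • M) :
    binetLegendre N ⊆ (a ^ ((n : ℝ) / 2) * b ^ (((n : ℝ) + 2) / 2)) • binetLegendre M := by
  refine binetLegendre_subset_smul_of_setAverage_le (by positivity) fun φ => ?_
  have hc : (a ^ ((n : ℝ) / 2) * b ^ (((n : ℝ) + 2) / 2)) ^ 2 = a ^ n * b ^ (n + 2) := by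
    rw [mul_pow, rpow_div_two_sq ha.le, rpow_div_two_sq hb.le, Real.rpow_natCast,
      ← Real.rpow_natCast b]
    push_cast
    rfl
  rw [hc]
  simpa only [finrank_euclideanSpace_fin] using
    setAverage_sq_le_of_subset_smul volume hM hM' ha hb hMN hNM φ

theorem stmt4_general {n : ℕ} (K L : Set (EuclideanSpace ℝ (Fin n)))
    (hKcomp : IsCompact K) (hKint : (interior K).Nonempty)
    (hLcomp : IsCompact L) (hLint : (interior L).Nonempty)
    (lam₁ lam₂ : ℝ) (hlam₁ : 0 < lam₁) (hlam₂ : 0 < lam₂)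
    (h₁ : lam₁⁻¹ • K ⊆ L) (h₂ : L ⊆ lam₂ • K) :
    binetLegendre K ⊆
        (lam₁ ^ (((n : ℝ) + 2) / 2) * lam₂ ^ ((n : ℝ) / 2)) • binetLegendre L ∧
    binetLegendre L ⊆
        (lam₁ ^ ((n : ℝ) / 2) * lam₂ ^ (((n : ℝ) + 2) / 2)) • binetLegendre K := by
  refine ⟨?_, binetLegendre_subset_smul_of_subset hKcomp hKint hlam₁ hlam₂ h₁ h₂⟩
  rw [mul_comm]
  exact binetLegendre_subset_smul_of_subset hLcomp hLint hlam₂ hlam₁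
    ((subset_smul_set_iff₀ hlam₂.ne').1 h₂) ((subset_smul_set_iff₀ hlam₁.ne').2 h₁)

theorem stmt4 {n : ℕ} (K L : Set (EuclideanSpace ℝ (Fin n)))
    (hKcomp : IsCompact K) (hKconv : Convex ℝ K) (hKint : (interior K).Nonempty)
    (hLcomp : IsCompact L) (hLconv : Convex ℝ L) (hLint : (interior L).Nonempty)
    (hKcent : centroid K = 0) (hLcent : centroid L = 0)
    (lam₁ lam₂ : ℝ) (hlam₁ : 0 < lam₁) (hlam₂ : 0 < lam₂)
    (h₁ : lam₁⁻¹ • K ⊆ L) (h₂ : L ⊆ lam₂ • K) :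
    binetLegendre K ⊆
        (lam₁ ^ (((n : ℝ) + 2) / 2) * lam₂ ^ ((n : ℝ) / 2)) • binetLegendre L ∧
    binetLegendre L ⊆
        (lam₁ ^ ((n : ℝ) / 2) * lam₂ ^ (((n : ℝ) + 2) / 2)) • binetLegendre K :=
  stmt4_general K L hKcomp hKint hLcomp hLint lam₁ lam₂ hlam₁ hlam₂ h₁ h₂
end

section
/- Let K ⊆ ℝⁿ be a convex body with centroid at the origin. Then a_n·E(K) ⊆ K ⊆ b_n·E(K), where E(K) is the Binet–Legendre ellipsoid of K, a_n = 2^{-n/2-1}·n^{-3n/4-3/2}, and b_n = 2^{n/2+1}·n^{3n/4+3/2}. -/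
open Set Metric Pointwise MeasureTheory

/-- `aConst n = 2^(-n/2-1) * n^(-3n/4-3/2)`. -/
noncomputable def aConst (n : ℕ) : ℝ :=
  (2 : ℝ) ^ (-(n : ℝ) / 2 - 1) * (n : ℝ) ^ (-(3 * (n : ℝ)) / 4 - 3 / 2)

/-- `bConst n = 2^(n/2+1) * n^(3n/4+3/2)`. -/
noncomputable def bConst (n : ℕ) : ℝ :=
  (2 : ℝ) ^ ((n : ℝ) / 2 + 1) * (n : ℝ) ^ (3 * (n : ℝ) / 4 + 3 / 2)

/-!
Both inclusions compare the second moment `∫_K φ²` of a linear functional `φ` with its extreme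
values on `K`, using homothetic copies of `K` inside `K`.

If `|φ|` is maximal on `K` at `p`, then `|φ| ≥ |φ p| / 2` on the copy of ratio `1/4` about `p`,
so `φ(x)² vol K ≤ 4^(n+1) ∫_K φ²` for `x ∈ K`; this gives `K ⊆ b_n E(K)`.

If `-m ≤ φ ≤ M` on `K` and `∫_K φ = 0` (centroid at the origin), then pointwise
`φ² ≤ M φ⁺ + m φ⁻` and `∫_K φ⁺ = ∫_K φ⁻`, so `∫_K φ² ≤ (M + m) ∫_K φ⁺`. The copy of ratio
`t = m / (M + m)` about a minimum point of `φ` lies in `{φ ≤ 0}`, hence `∫_K φ⁺ ≤ M (1 - tⁿ) vol K`,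
and Bernoulli's inequality turns this into `∫_K φ² ≤ n M² vol K`. For a point of `a_n E(K)` outside
`K`, a separating functional `φ` with `φ < u` on `K` then satisfies `φ ≤ u` on `a_n E(K)`,
a contradiction.
-/

section CompactIntegral

variable {X : Type*} [TopologicalSpace X] [T2Space X] [MeasurableSpace X] [OpensMeasurableSpace X]
  {μ : Measure X} [IsFiniteMeasureOnCompacts μ] {K : Set X} {f : X → ℝ}

theorem nonneg_of_setIntegral_eq_zero (hK : IsCompact K) (hf : Continuous f) (hμK : μ K ≠ 0)
    (h : ∫ x in K, f x ∂μ = 0) {M : ℝ} (hM : ∀ x ∈ K, f x ≤ M) : 0 ≤ M := by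
  have hle : ∫ x in K, f x ∂μ ≤ ∫ _ in K, M ∂μ :=
    setIntegral_mono_on (hf.continuousOn.integrableOn_compact hK)
      (integrableOn_const hK.measure_lt_top.ne) hK.measurableSet hM
  have hpos : 0 < μ.real K := ENNReal.toReal_pos hμK hK.measure_lt_top.ne
  rw [h, setIntegral_const, smul_eq_mul] at hle
  exact nonneg_of_mul_nonneg_right hle hpos

theorem setIntegral_sq_le_mul_setIntegral_max_zero (hK : IsCompact K) (hf : Continuous f)
    (h : ∫ x in K, f x ∂μ = 0) {M m : ℝ} (hM : ∀ x ∈ K, f x ≤ M) (hm : ∀ x ∈ K, -m ≤ f x) :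
    ∫ x in K, f x ^ 2 ∂μ ≤ (M + m) * ∫ x in K, max (f x) 0 ∂μ := by
  have hint : ∀ {g : X → ℝ}, Continuous g → IntegrableOn g K μ :=
    fun hg => hg.continuousOn.integrableOn_compact hK
  have hpos : IntegrableOn (fun x => max (f x) 0) K μ := hint (hf.max continuous_const)
  have hneg : IntegrableOn (fun x => max (-f x) 0) K μ := hint (hf.neg.max continuous_const)
  have hparts : ∫ x in K, max (-f x) 0 ∂μ = ∫ x in K, max (f x) 0 ∂μ := by
    have := integral_sub hpos hneg
    simp only [max_zero_sub_eq_self, h] at this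
    linarith
  calc ∫ x in K, f x ^ 2 ∂μ
      ≤ ∫ x in K, (M * max (f x) 0 + m * max (-f x) 0) ∂μ := by
        refine setIntegral_mono_on (hint (hf.pow 2))
          ((hpos.const_mul M).add (hneg.const_mul m)) hK.measurableSet fun x hx => ?_
        have := hM x hx
        have := hm x hx
        rcases le_total 0 (f x) with h0 | h0
        · rw [max_eq_left h0, max_eq_right (neg_nonpos.2 h0)]; nlinarith
        · rw [max_eq_right h0, max_eq_left (neg_nonneg.2 h0)]; nlinarith
    _ = (M + m) * ∫ x in K, max (f x) 0 ∂μ := by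
        rw [integral_add (hpos.const_mul M) (hneg.const_mul m), integral_const_mul,
          integral_const_mul, hparts]
        ring

end CompactIntegral

open AffineMap Module

section Homothety

variable {E : Type*} [AddCommGroup E] [Module ℝ E]

theorem Convex.homothety_image_subset {K : Set E} (hK : Convex ℝ K) {p : E} (hp : p ∈ K)
    {t : ℝ} (ht : t ∈ Icc (0 : ℝ) 1) : homothety p t '' K ⊆ K := by
  rintro _ ⟨x, hx, rfl⟩
  rw [homothety_eq_lineMap]
  exact hK.lineMap_mem hp hx ht

theorem ContinuousLinearMap.apply_homothety [TopologicalSpace E] (f : E →L[ℝ] ℝ) (p x : E)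
    (t : ℝ) :
    f (homothety p t x) = (1 - t) * f p + t * f x := by
  simp only [homothety_apply, vsub_eq_sub, vadd_eq_add, map_add, map_smul, map_sub, smul_eq_mul]
  ring

end Homothety

section HaarMoments

variable {E : Type*} [NormedAddCommGroup E] [NormedSpace ℝ E] [FiniteDimensional ℝ E]
  [MeasurableSpace E] [BorelSpace E] {μ : Measure E} [μ.IsAddHaarMeasure] {K : Set E}

theorem addHaar_real_image_homothety (p : E) {t : ℝ} (ht : 0 ≤ t) (s : Set E) :
    μ.real (homothety p t '' s) = t ^ finrank ℝ E * μ.real s := by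
  rw [measureReal_def, Measure.addHaar_image_homothety, ENNReal.toReal_mul,
    ENNReal.toReal_ofReal (by positivity), abs_of_nonneg (by positivity), measureReal_def]

theorem sq_apply_mul_measureReal_le_setIntegral_sq (hK : IsCompact K) (hKc : Convex ℝ K)
    (f : E →L[ℝ] ℝ) {x : E} (hx : x ∈ K) :
    f x ^ 2 * μ.real K ≤ 4 ^ (finrank ℝ E + 1) * ∫ y in K, f y ^ 2 ∂μ := by
  obtain ⟨p, hp, hpmax⟩ :=
    hK.exists_isMaxOn ⟨x, hx⟩ (continuous_abs.comp f.continuous).continuousOn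
  set T := homothety p (1 / 4 : ℝ) '' K
  have hTK : T ⊆ K := hKc.homothety_image_subset hp ⟨by norm_num, by norm_num⟩
  have hT : IsCompact T := hK.image (homothety_continuous p _)
  -- on `T`, `f y = (3 f p + f z) / 4` with `|f z| ≤ |f p|`, so `|f y| ≥ |f p| / 2`
  have hfT : ∀ y ∈ T, (f p / 2) ^ 2 ≤ f y ^ 2 := by
    rintro _ ⟨z, hz, rfl⟩
    have hz' : |f z| ≤ |f p| := hpmax hz
    rw [f.apply_homothety]
    rcases le_total 0 (f p) with h | h
    · rw [abs_of_nonneg h] at hz'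
      nlinarith [abs_le.1 hz']
    · rw [abs_of_nonpos h] at hz'
      nlinarith [abs_le.1 hz']
  have hint : IntegrableOn (fun y => f y ^ 2) K μ :=
    (f.continuous.pow 2).continuousOn.integrableOn_compact hK
  have hxp : |f x| ≤ |f p| := hpmax hx
  calc f x ^ 2 * μ.real K ≤ f p ^ 2 * μ.real K :=
        mul_le_mul_of_nonneg_right (sq_le_sq.2 hxp) measureReal_nonneg
    _ = 4 ^ (finrank ℝ E + 1) * ((f p / 2) ^ 2 * μ.real T) := by
        rw [addHaar_real_image_homothety p (by norm_num), one_div, inv_pow]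
        field_simp
        ring
    _ ≤ 4 ^ (finrank ℝ E + 1) * ∫ y in T, f y ^ 2 ∂μ := by
        gcongr
        exact setIntegral_ge_of_const_le_real hT.measurableSet hT.measure_lt_top.ne hfT
          (hint.mono_set hTK)
    _ ≤ 4 ^ (finrank ℝ E + 1) * ∫ y in K, f y ^ 2 ∂μ := by
        refine mul_le_mul_of_nonneg_left ?_ (by positivity)
        exact setIntegral_mono_set hint (.of_forall fun _ => sq_nonneg _) hTK.eventuallyLE

theorem setIntegral_max_zero_le_of_homothety_nonpos (hK : IsCompact K) (hKc : Convex ℝ K)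
    (f : E →L[ℝ] ℝ) {M : ℝ} (hM0 : 0 ≤ M) (hM : ∀ x ∈ K, f x ≤ M) {q : E} (hq : q ∈ K) {t : ℝ}
    (ht : t ∈ Icc (0 : ℝ) 1) (htq : (1 - t) * f q + t * M ≤ 0) :
    ∫ x in K, max (f x) 0 ∂μ ≤ M * (1 - t ^ finrank ℝ E) * μ.real K := by
  set T := homothety q t '' K
  have hTK : T ⊆ K := hKc.homothety_image_subset hq ht
  have hT : IsCompact T := hK.image (homothety_continuous q t)
  have hfT : ∀ y ∈ T, f y ≤ 0 := by
    rintro _ ⟨z, hz, rfl⟩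
    rw [f.apply_homothety]
    nlinarith [hM z hz, ht.1]
  calc ∫ x in K, max (f x) 0 ∂μ = ∫ x in K \ T, max (f x) 0 ∂μ := by
        refine setIntegral_eq_of_subset_of_forall_sdiff_eq_zero hK.measurableSet sdiff_subset
          fun y hy => ?_
        have hyT : y ∈ T := by simpa [hy.1] using hy.2
        exact max_eq_right (hfT y hyT)
    _ ≤ ∫ _ in K \ T, M ∂μ :=
        setIntegral_mono_on
          ((f.continuous.max continuous_const).continuousOn.integrableOn_compact hK |>.mono_set
            sdiff_subset)
          (integrableOn_const ((measure_mono sdiff_subset).trans_lt hK.measure_lt_top).ne)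
          (hK.measurableSet.diff hT.measurableSet) fun y hy => max_le (hM y hy.1) hM0
    _ = M * μ.real (K \ T) := by rw [setIntegral_const, smul_eq_mul, mul_comm]
    _ = M * (1 - t ^ finrank ℝ E) * μ.real K := by
        rw [measureReal_sdiff hTK hT.measurableSet hK.measure_lt_top.ne,
          addHaar_real_image_homothety q ht.1]
        ring

theorem setIntegral_sq_le_of_setIntegral_eq_zero (hK : IsCompact K) (hKc : Convex ℝ K)
    (f : E →L[ℝ] ℝ) (h0 : ∫ x in K, f x ∂μ = 0) {M : ℝ} (hM : ∀ x ∈ K, f x ≤ M) :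
    ∫ x in K, f x ^ 2 ∂μ ≤ finrank ℝ E * M ^ 2 * μ.real K := by
  rcases eq_or_ne (μ K) 0 with hμK | hμK
  · simp [Measure.restrict_eq_zero.2 hμK, measureReal_def, hμK]
  obtain ⟨q, hq, hqmin⟩ :=
    hK.exists_isMinOn (nonempty_of_measure_ne_zero hμK) f.continuous.continuousOn
  set m := -f q
  have hm : ∀ x ∈ K, -m ≤ f x := fun x hx => by simpa [m] using hqmin hx
  have hM0 : 0 ≤ M := nonneg_of_setIntegral_eq_zero hK f.continuous hμK h0 hM
  have hm0 : 0 ≤ m := nonneg_of_setIntegral_eq_zero hK f.continuous.neg hμK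
    (by simp only [Pi.neg_apply, integral_neg, h0, neg_zero]) fun x hx => neg_le_neg (hqmin hx)
  set t := m / (M + m)
  have ht : t ∈ Icc (0 : ℝ) 1 := ⟨by positivity, div_le_one_of_le₀ (by linarith) (by linarith)⟩
  have hMt : (M + m) * (1 - t) = M := by
    rcases eq_or_ne (M + m) 0 with h | h
    · simp only [t, h, div_zero]
      linarith
    · rw [mul_sub, mul_one, mul_div_cancel₀ _ h]
      ring
  have hbern : 1 - t ^ finrank ℝ E ≤ finrank ℝ E * (1 - t) := by
    have := one_add_mul_le_pow (a := t - 1) (by linarith [ht.1]) (finrank ℝ E)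
    rw [add_sub_cancel] at this
    linarith
  calc ∫ x in K, f x ^ 2 ∂μ ≤ (M + m) * ∫ x in K, max (f x) 0 ∂μ :=
        setIntegral_sq_le_mul_setIntegral_max_zero hK f.continuous h0 hM hm
    _ ≤ (M + m) * (M * (1 - t ^ finrank ℝ E) * μ.real K) := by
        refine mul_le_mul_of_nonneg_left
          (setIntegral_max_zero_le_of_homothety_nonpos hK hKc f hM0 hM hq ht ?_) (by positivity)
        linear_combination -hMt
    _ ≤ (M + m) * (M * (finrank ℝ E * (1 - t)) * μ.real K) := by gcongr
    _ = finrank ℝ E * M ^ 2 * μ.real K := by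
        linear_combination (finrank ℝ E * M * μ.real K) * hMt

end HaarMoments

section BinetLegendre

variable {n : ℕ} {K : Set (EuclideanSpace ℝ (Fin n))}

theorem zero_mem_binetLegendre : (0 : EuclideanSpace ℝ (Fin n)) ∈ binetLegendre K :=
  fun φ _ => by simp

theorem apply_le_sqrt_of_mem_binetLegendre {x : EuclideanSpace ℝ (Fin n)}
    (hx : x ∈ binetLegendre K) (φ : EuclideanSpace ℝ (Fin n) →ₗ[ℝ] ℝ) :
    φ x ≤ √(((n : ℝ) + 2) / (volume K).toReal * ∫ y in K, φ y ^ 2) := by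
  set Q := ((n : ℝ) + 2) / (volume K).toReal * ∫ y in K, φ y ^ 2
  refine le_of_forall_pos_le_add fun ε hε => ?_
  have hc : 0 < √Q + ε := by positivity
  have hQc : Q ≤ (√Q + ε) ^ 2 := (Real.sqrt_le_left hc.le).1 (le_add_of_nonneg_right hε.le)
  have hψ : ((n : ℝ) + 2) / (volume K).toReal * ∫ y in K, ((√Q + ε)⁻¹ • φ) y ^ 2 ≤ 1 := by
    simp only [LinearMap.smul_apply, smul_eq_mul, mul_pow, integral_const_mul]
    rw [mul_left_comm, inv_pow, inv_mul_le_one₀ (by positivity)]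
    exact hQc
  have := hx _ hψ
  rwa [LinearMap.smul_apply, smul_eq_mul, inv_mul_le_one₀ hc] at this

theorem mem_smul_binetLegendre_of_forall_apply_le {c : ℝ} (hc : 0 < c)
    {x : EuclideanSpace ℝ (Fin n)}
    (h : ∀ φ : EuclideanSpace ℝ (Fin n) →ₗ[ℝ] ℝ,
      ((n : ℝ) + 2) / (volume K).toReal * ∫ y in K, φ y ^ 2 ≤ 1 → φ x ≤ c) :
    x ∈ c • binetLegendre K :=
  ⟨c⁻¹ • x, fun φ hφ => by rw [map_smul, smul_eq_mul, inv_mul_le_one₀ hc]; exact h φ hφ,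
    smul_inv_smul₀ hc.ne' x⟩

theorem setIntegral_eq_zero_of_centroid_eq_zero (hK : IsCompact K)
    (hV : (volume K).toReal ≠ 0) (hc : centroid K = 0)
    (f : EuclideanSpace ℝ (Fin n) →L[ℝ] ℝ) : ∫ x in K, f x = 0 := by
  have h : ∫ x in K, x = 0 := by simpa [centroid, hV] using hc
  rw [← map_zero f, ← h]
  exact f.integral_comp_comm (continuous_id.continuousOn.integrableOn_compact hK)

theorem smul_binetLegendre_subset (hK : IsCompact K) (hKc : Convex ℝ K)
    (hKint : (interior K).Nonempty) (hcent : centroid K = 0) {c : ℝ} (hc : 0 ≤ c)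
    (hc' : c * √(n * (n + 2)) ≤ 1) : c • binetLegendre K ⊆ K := by
  have hμK : volume K ≠ 0 := (Measure.measure_pos_of_nonempty_interior _ hKint).ne'
  have hV : 0 < (volume K).toReal := ENNReal.toReal_pos hμK hK.measure_lt_top.ne
  rintro _ ⟨x, hx, rfl⟩
  by_contra hz
  obtain ⟨f, u, hfK, hfz⟩ := geometric_hahn_banach_closed_point hKc hK.isClosed hz
  have h0 := setIntegral_eq_zero_of_centroid_eq_zero hK hV.ne' hcent f
  have hfu : ∀ y ∈ K, f y ≤ u := fun y hy => (hfK y hy).le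
  have hu : 0 ≤ u := nonneg_of_setIntegral_eq_zero hK f.continuous hμK h0 hfu
  have hmoment := setIntegral_sq_le_of_setIntegral_eq_zero hK hKc f h0 hfu
  rw [finrank_euclideanSpace_fin] at hmoment
  have hfx : f x ≤ √(n * (n + 2)) * u :=
    calc f x ≤ √(((n : ℝ) + 2) / (volume K).toReal * ∫ y in K, f y ^ 2) :=
          apply_le_sqrt_of_mem_binetLegendre hx f.toLinearMap
      _ ≤ √(((n : ℝ) + 2) / (volume K).toReal * (n * u ^ 2 * (volume K).toReal)) := by
          gcongr
          exact hmoment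
      _ = √(n * (n + 2)) * u := by
          conv_rhs => rw [← Real.sqrt_sq hu, ← Real.sqrt_mul (by positivity)]
          congr 1
          field_simp
  have : f (c • x) ≤ u :=
    calc f (c • x) = c * f x := by rw [map_smul, smul_eq_mul]
      _ ≤ c * (√(n * (n + 2)) * u) := mul_le_mul_of_nonneg_left hfx hc
      _ ≤ u := by rw [← mul_assoc]; exact mul_le_of_le_one_left hu hc'
  linarith

theorem subset_smul_binetLegendre (hK : IsCompact K) (hKc : Convex ℝ K)
    (hKint : (interior K).Nonempty) {c : ℝ} (hc : 0 < c)
    (hc' : (4 : ℝ) ^ (n + 1) ≤ (n + 2) * c ^ 2) :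
    K ⊆ c • binetLegendre K := by
  have hV : 0 < (volume K).toReal :=
    ENNReal.toReal_pos (Measure.measure_pos_of_nonempty_interior _ hKint).ne' hK.measure_lt_top.ne
  intro x hx
  refine mem_smul_binetLegendre_of_forall_apply_le hc fun φ hφ => ?_
  have hmoment :=
    sq_apply_mul_measureReal_le_setIntegral_sq hK hKc (μ := volume) φ.toContinuousLinearMap hx
  simp only [LinearMap.coe_toContinuousLinearMap', finrank_euclideanSpace_fin,
    measureReal_def] at hmoment
  rw [div_mul_eq_mul_div, div_le_one hV] at hφ
  have : (n + 2) * (φ x ^ 2 * (volume K).toReal) ≤ (n + 2) * (c ^ 2 * (volume K).toReal) :=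
    calc (n + 2) * (φ x ^ 2 * (volume K).toReal)
        ≤ (n + 2) * (4 ^ (n + 1) * ∫ y in K, φ y ^ 2) := by gcongr
      _ = 4 ^ (n + 1) * ((n + 2) * ∫ y in K, φ y ^ 2) := by ring
      _ ≤ 4 ^ (n + 1) * (volume K).toReal := by gcongr
      _ ≤ (n + 2) * c ^ 2 * (volume K).toReal := by gcongr
      _ = (n + 2) * (c ^ 2 * (volume K).toReal) := by ring
  have hsq : φ x ^ 2 ≤ c ^ 2 :=
    le_of_mul_le_mul_right (le_of_mul_le_mul_left this (by positivity)) hV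
  exact (abs_le_of_sq_le_sq' hsq hc.le).2

end BinetLegendre

theorem two_pow_le_add_two_mul_pow {n : ℕ} (hn : 1 ≤ n) : 2 ^ n ≤ (n + 2) * n ^ (n + 3) := by
  obtain _ | _ | n := n
  · omega
  · norm_num
  calc 2 ^ (n + 2) ≤ (n + 2) ^ (n + 2) := Nat.pow_le_pow_left (by omega) _
    _ ≤ (n + 2) ^ (n + 2 + 3) := Nat.pow_le_pow_right (by omega) (by omega)
    _ ≤ (n + 2 + 2) * (n + 2) ^ (n + 2 + 3) := Nat.le_mul_of_pos_left _ (by omega)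

theorem aConst_eq_inv_bConst (n : ℕ) : aConst n = (bConst n)⁻¹ := by
  rw [aConst, bConst, mul_inv, ← Real.rpow_neg zero_le_two, ← Real.rpow_neg n.cast_nonneg]
  congr 2 <;> ring

theorem bConst_nonneg (n : ℕ) : 0 ≤ bConst n := by
  unfold bConst
  positivity

theorem aConst_nonneg (n : ℕ) : 0 ≤ aConst n := by
  rw [aConst_eq_inv_bConst]
  exact inv_nonneg.2 (bConst_nonneg n)

theorem bConst_pos {n : ℕ} (hn : 1 ≤ n) : 0 < bConst n := by
  have : (0 : ℝ) < n := by exact_mod_cast hn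
  unfold bConst
  positivity

theorem two_pow_mul_pow_le_bConst_sq (n : ℕ) :
    (2 : ℝ) ^ (n + 2) * (n : ℝ) ^ (n + 3) ≤ bConst n ^ 2 := by
  rcases n.eq_zero_or_pos with rfl | hn
  · simpa using sq_nonneg (bConst 0)
  have hsq : bConst n ^ 2 = (2 : ℝ) ^ ((n : ℝ) + 2) * (n : ℝ) ^ (3 * (n : ℝ) / 2 + 3) := by
    rw [bConst, mul_pow, ← Real.rpow_mul_natCast zero_le_two,
      ← Real.rpow_mul_natCast n.cast_nonneg]
    congr 2 <;> push_cast <;> ring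
  rw [hsq, ← Real.rpow_natCast, ← Real.rpow_natCast (n : ℝ)]
  push_cast
  gcongr
  · exact_mod_cast hn
  · linarith

theorem aConst_mul_sqrt_le_one (n : ℕ) : aConst n * √(n * (n + 2)) ≤ 1 := by
  have hb : (n : ℝ) * (n + 2) ≤ bConst n ^ 2 := by
    refine le_trans ?_ (two_pow_mul_pow_le_bConst_sq n)
    rw [mul_comm]
    refine mul_le_mul ?_ ?_ n.cast_nonneg (by positivity)
    · exact_mod_cast Nat.lt_two_pow_self.le
    · exact_mod_cast Nat.le_self_pow (by omega) n
  rw [aConst_eq_inv_bConst]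
  exact inv_mul_le_one_of_le₀ ((Real.sqrt_le_left (bConst_nonneg n)).2 hb) (bConst_nonneg n)

theorem four_pow_le_add_two_mul_bConst_sq {n : ℕ} (hn : 1 ≤ n) :
    (4 : ℝ) ^ (n + 1) ≤ (n + 2) * bConst n ^ 2 := by
  have h : (2 : ℝ) ^ n ≤ (n + 2) * n ^ (n + 3) := by exact_mod_cast two_pow_le_add_two_mul_pow hn
  calc (4 : ℝ) ^ (n + 1) = 2 ^ n * 2 ^ (n + 2) := by
        rw [show (4 : ℝ) = 2 ^ 2 by norm_num, ← pow_mul, ← pow_add]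
        ring_nf
    _ ≤ (n + 2) * n ^ (n + 3) * 2 ^ (n + 2) := by gcongr
    _ = (n + 2) * (2 ^ (n + 2) * n ^ (n + 3)) := by ring
    _ ≤ (n + 2) * bConst n ^ 2 := by gcongr; exact two_pow_mul_pow_le_bConst_sq n

theorem stmt5 {n : ℕ} (K : Set (EuclideanSpace ℝ (Fin n)))
    (hKcomp : IsCompact K) (hKconv : Convex ℝ K) (hKint : (interior K).Nonempty)
    (hKcent : centroid K = 0) :
    aConst n • binetLegendre K ⊆ K ∧ K ⊆ bConst n • binetLegendre K := by
  refine ⟨smul_binetLegendre_subset hKcomp hKconv hKint hKcent (aConst_nonneg n)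
    (aConst_mul_sqrt_le_one n), ?_⟩
  rcases n.eq_zero_or_pos with rfl | hn
  · exact fun _ _ => ⟨0, zero_mem_binetLegendre, Subsingleton.elim _ _⟩
  exact subset_smul_binetLegendre hKcomp hKconv hKint (bConst_pos hn)
    (four_pow_le_add_two_mul_bConst_sq hn)
end

section
/- Let V be a real normed space and H a real inner-product space, and suppose there is a linear bijection T : V → H and λ ≥ 1 with ‖Tx‖ ≤ ‖x‖ ≤ λ‖Tx‖ for all x ∈ V. Then for all x, y ∈ V not both zero, 1/λ² ≤ (‖x + y‖² + ‖x − y‖²)/(2(‖x‖² + ‖y‖²)) ≤ λ². In particular, the von Neumann–Jordan constant of V satisfies C_NJ(V) ≤ d_BM(V, 𝔼ⁿ)². -/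
/-!
Squared norms of `V` and of the inner-product space `H` differ by at most the factor `lam ^ 2`
under `T`, and in `H` the parallelogram law holds with equality. Transporting
`‖x + y‖² + ‖x - y‖²` to `H`, applying the parallelogram law there and transporting back
`2 (‖x‖² + ‖y‖²)` loses the factor `lam ^ 2` once, in either direction.
-/

lemma one_div_le_div_of_le_mul {a b c : ℝ} (hb : 0 < b) (ha : 0 ≤ a) (h : b ≤ c * a) :
    1 / c ≤ a / b := by
  have hc : 0 < c := pos_of_mul_pos_left (hb.trans_le h) ha
  rw [div_le_div_iff₀ hc hb]
  linarith

section Comparison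

variable {V H : Type*} [NormedAddCommGroup V] [NormedSpace ℝ V]
  [NormedAddCommGroup H] [InnerProductSpace ℝ H] {T : V →ₗ[ℝ] H} {lam : ℝ}

lemma sq_norm_le_sq_mul_sq_norm_map (hge : ∀ x, ‖x‖ ≤ lam * ‖T x‖) (x : V) :
    ‖x‖ ^ 2 ≤ lam ^ 2 * ‖T x‖ ^ 2 := by
  simpa only [mul_pow] using pow_le_pow_left₀ (norm_nonneg x) (hge x) 2

lemma parallelogram_law_map (T : V →ₗ[ℝ] H) (x y : V) :
    ‖T (x + y)‖ ^ 2 + ‖T (x - y)‖ ^ 2 = 2 * (‖T x‖ ^ 2 + ‖T y‖ ^ 2) := by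
  rw [map_add, map_sub]
  exact parallelogram_law_with_norm ℝ _ _

lemma norm_add_sq_add_norm_sub_sq_le (hle : ∀ x, ‖T x‖ ≤ ‖x‖)
    (hge : ∀ x, ‖x‖ ≤ lam * ‖T x‖) (x y : V) :
    ‖x + y‖ ^ 2 + ‖x - y‖ ^ 2 ≤ lam ^ 2 * (2 * (‖x‖ ^ 2 + ‖y‖ ^ 2)) :=
  calc ‖x + y‖ ^ 2 + ‖x - y‖ ^ 2
      ≤ lam ^ 2 * ‖T (x + y)‖ ^ 2 + lam ^ 2 * ‖T (x - y)‖ ^ 2 :=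
        add_le_add (sq_norm_le_sq_mul_sq_norm_map hge _) (sq_norm_le_sq_mul_sq_norm_map hge _)
    _ = lam ^ 2 * (2 * (‖T x‖ ^ 2 + ‖T y‖ ^ 2)) := by rw [← mul_add, parallelogram_law_map]
    _ ≤ lam ^ 2 * (2 * (‖x‖ ^ 2 + ‖y‖ ^ 2)) := by
        gcongr <;> apply hle

lemma le_norm_add_sq_add_norm_sub_sq (hle : ∀ x, ‖T x‖ ≤ ‖x‖)
    (hge : ∀ x, ‖x‖ ≤ lam * ‖T x‖) (x y : V) :
    2 * (‖x‖ ^ 2 + ‖y‖ ^ 2) ≤ lam ^ 2 * (‖x + y‖ ^ 2 + ‖x - y‖ ^ 2) :=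
  calc 2 * (‖x‖ ^ 2 + ‖y‖ ^ 2)
      ≤ 2 * (lam ^ 2 * ‖T x‖ ^ 2 + lam ^ 2 * ‖T y‖ ^ 2) := by
        gcongr
        · exact sq_norm_le_sq_mul_sq_norm_map hge x
        · exact sq_norm_le_sq_mul_sq_norm_map hge y
    _ = lam ^ 2 * (‖T (x + y)‖ ^ 2 + ‖T (x - y)‖ ^ 2) := by rw [parallelogram_law_map]; ring
    _ ≤ lam ^ 2 * (‖x + y‖ ^ 2 + ‖x - y‖ ^ 2) := by
        gcongr <;> apply hle

end Comparison

lemma sq_norm_add_sq_norm_pos {V : Type*} [NormedAddCommGroup V] {x y : V}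
    (hxy : ¬(x = 0 ∧ y = 0)) : 0 < ‖x‖ ^ 2 + ‖y‖ ^ 2 := by
  rcases not_and_or.mp hxy with hx | hy
  · exact add_pos_of_pos_of_nonneg (by positivity) (sq_nonneg _)
  · exact add_pos_of_nonneg_of_pos (sq_nonneg _) (by positivity)

theorem stmt11_general {V H : Type*} [NormedAddCommGroup V] [NormedSpace ℝ V]
    [NormedAddCommGroup H] [InnerProductSpace ℝ H]
    (T : V ≃ₗ[ℝ] H) (lam : ℝ)
    (hT : ∀ x : V, ‖T x‖ ≤ ‖x‖ ∧ ‖x‖ ≤ lam * ‖T x‖) :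
    ∀ x y : V, ¬(x = 0 ∧ y = 0) →
      1 / lam ^ 2 ≤ (‖x + y‖ ^ 2 + ‖x - y‖ ^ 2) / (2 * (‖x‖ ^ 2 + ‖y‖ ^ 2)) ∧
      (‖x + y‖ ^ 2 + ‖x - y‖ ^ 2) / (2 * (‖x‖ ^ 2 + ‖y‖ ^ 2)) ≤ lam ^ 2 := by
  intro x y hxy
  have hle (v : V) : ‖T.toLinearMap v‖ ≤ ‖v‖ := (hT v).1
  have hge (v : V) : ‖v‖ ≤ lam * ‖T.toLinearMap v‖ := (hT v).2
  have hden : 0 < 2 * (‖x‖ ^ 2 + ‖y‖ ^ 2) := mul_pos two_pos (sq_norm_add_sq_norm_pos hxy)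
  exact ⟨one_div_le_div_of_le_mul hden (by positivity) (le_norm_add_sq_add_norm_sub_sq hle hge x y),
    (div_le_iff₀ hden).2 (norm_add_sq_add_norm_sub_sq_le hle hge x y)⟩

theorem stmt11 {V H : Type*} [NormedAddCommGroup V] [NormedSpace ℝ V]
    [NormedAddCommGroup H] [InnerProductSpace ℝ H]
    (T : V ≃ₗ[ℝ] H) (lam : ℝ) (hlam : 1 ≤ lam)
    (hT : ∀ x : V, ‖T x‖ ≤ ‖x‖ ∧ ‖x‖ ≤ lam * ‖T x‖) :
    ∀ x y : V, ¬(x = 0 ∧ y = 0) →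
      1 / lam ^ 2 ≤ (‖x + y‖ ^ 2 + ‖x - y‖ ^ 2) / (2 * (‖x‖ ^ 2 + ‖y‖ ^ 2)) ∧
      (‖x + y‖ ^ 2 + ‖x - y‖ ^ 2) / (2 * (‖x‖ ^ 2 + ‖y‖ ^ 2)) ≤ lam ^ 2 :=
  stmt11_general T lam hT
end

section
/- Let n ≥ 2 and let K ⊆ ℝⁿ be a convex body with 0 in its interior. Then there exists an (n−1)-dimensional linear subspace H ⊆ ℝⁿ such that the centroid of the (n−1)-dimensional convex body K ∩ H (computed with respect to (n−1)-dimensional Lebesgue measure on H) is the origin. -/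
open Set Metric MeasureTheory

/-- The centroid of a set in a finite-dimensional inner-product space (e.g. a linear
subspace `H ⊆ ℝⁿ`), computed with respect to the Lebesgue measure of that space. -/
noncomputable def centroidIn {W : Type*} [NormedAddCommGroup W] [InnerProductSpace ℝ W]
    [FiniteDimensional ℝ W] [MeasurableSpace W] [BorelSpace W] (L : Set W) : W :=
  (volume L).toReal⁻¹ • ∫ x in L, x

/-!
Choose a unit vector `u` maximising the volume of the half `K ∩ {⟪x, u⟫ ≤ 0}`; it exists because
this volume depends continuously on `u`, hyperplanes being null. For `a ⊥ u`, write points as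
`y + t u` with `y ∈ u^⊥`: the half cut off by the tilted hyperplane `(u - ε a)^⊥` is the subgraph
`{y + t u ∈ K | t ≤ ε ⟪a, y⟫}`. Its volume is the integral over `y` of the length of
`{t ≤ ε ⟪a, y⟫}` in the fibre of `K` over `y`, a 1-Lipschitz function of the bound whose
derivative at `0` is `1` if `y` is interior to the section `K ∩ u^⊥` and `0` if `y` lies outside
it; the boundary of the convex section is null. Differentiating under the integral, the
derivative in `ε` at `0` is `∫_{K ∩ u^⊥} ⟪a, y⟫`, which vanishes at the maximum. As `a` is
arbitrary, the first moment of `K ∩ u^⊥` is zero.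
-/

open Filter
open scoped RealInnerProductSpace ENNReal NNReal Topology

section CumulativeVolume

variable {I : Set ℝ}

theorem lipschitzWith_volume_inter_Iic (hI : volume I ≠ ∞) :
    LipschitzWith 1 fun s => (volume (I ∩ Iic s)).toReal := by
  refine LipschitzWith.of_le_add_mul 1 fun s t => ?_
  have hsub : I ∩ Iic s ⊆ (I ∩ Iic t) ∪ Ioc t s := fun x ⟨hxI, hxs⟩ =>
    (le_or_gt x t).imp (fun hxt => ⟨hxI, hxt⟩) fun htx => ⟨htx, hxs⟩
  have hfin : volume (I ∩ Iic t) ≠ ∞ := measure_ne_top_of_subset inter_subset_left hI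
  calc (volume (I ∩ Iic s)).toReal
      ≤ (volume (I ∩ Iic t) + ENNReal.ofReal (s - t)).toReal := by
        refine ENNReal.toReal_mono (by finiteness) ?_
        rw [← Real.volume_Ioc]
        exact (measure_mono hsub).trans (measure_union_le _ _)
    _ ≤ (volume (I ∩ Iic t)).toReal + ↑(1 : ℝ≥0) * dist s t := by
        rw [ENNReal.toReal_add hfin ENNReal.ofReal_ne_top, NNReal.coe_one, one_mul,
          Real.dist_eq, ENNReal.toReal_ofReal']
        gcongr
        exact max_le (le_abs_self _) (abs_nonneg _)

theorem hasDerivAt_volume_inter_Iic_of_mem_nhds (hI : volume I ≠ ∞) {x : ℝ} (hx : I ∈ 𝓝 x) :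
    HasDerivAt (fun s => (volume (I ∩ Iic s)).toReal) 1 x := by
  obtain ⟨l, r, ⟨hlx, hxr⟩, hlr⟩ := mem_nhds_iff_exists_Ioo_subset.1 hx
  obtain ⟨a, hla, hax⟩ := exists_between hlx
  have hfin : volume (I ∩ Iic a) ≠ ∞ := measure_ne_top_of_subset inter_subset_left hI
  have haffine : ∀ s ∈ Ioo a r,
      (volume (I ∩ Iic s)).toReal = (volume (I ∩ Iic a)).toReal + (s - a) := by
    rintro s ⟨has, hsr⟩
    have hsplit : I ∩ Iic s = (I ∩ Iic a) ∪ Ioc a s := by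
      ext t
      constructor
      · rintro ⟨htI, hts⟩
        exact (le_or_gt t a).imp (fun hta => ⟨htI, hta⟩) fun hat => ⟨hat, hts⟩
      · rintro (⟨htI, hta⟩ | ⟨hat, hts⟩)
        · exact ⟨htI, hta.trans has.le⟩
        · exact ⟨hlr ⟨hla.trans hat, hts.trans_lt hsr⟩, hts⟩
    rw [hsplit, measure_union (Iic_disjoint_Ioc le_rfl |>.mono_left inter_subset_right)
      measurableSet_Ioc, Real.volume_Ioc, ENNReal.toReal_add hfin ENNReal.ofReal_ne_top,
      ENNReal.toReal_ofReal (sub_nonneg.2 has.le)]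
  have hlin : HasDerivAt (fun s => (volume (I ∩ Iic a)).toReal + (s - a)) 1 x :=
    ((hasDerivAt_id x).sub_const a).const_add _
  exact hlin.congr_of_eventuallyEq <| eventually_of_mem (Ioo_mem_nhds hax hxr) haffine

theorem hasDerivAt_volume_inter_Iic_of_compl_mem_nhds {x : ℝ} (hx : Iᶜ ∈ 𝓝 x) :
    HasDerivAt (fun s => (volume (I ∩ Iic s)).toReal) 0 x := by
  obtain ⟨l, r, ⟨hlx, hxr⟩, hlr⟩ := mem_nhds_iff_exists_Ioo_subset.1 hx
  have hconst : ∀ s ∈ Ioo l r, (volume (I ∩ Iic s)).toReal = (volume (I ∩ Iic l)).toReal := by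
    rintro s ⟨hls, hsr⟩
    congr 2
    ext t
    refine ⟨fun ⟨htI, hts⟩ => ⟨htI, mem_Iic.2 ?_⟩, fun ⟨htI, htl⟩ => ⟨htI, htl.trans hls.le⟩⟩
    by_contra! hlt
    exact hlr ⟨hlt, hts.trans_lt hsr⟩ htI
  exact (hasDerivAt_const x _).congr_of_eventuallyEq <|
    eventually_of_mem (Ioo_mem_nhds hlx hxr) hconst

end CumulativeVolume

theorem Convex.interior_preimage_subset_preimage_interior {E F : Type*} [AddCommGroup E]
    [Module ℝ E] [TopologicalSpace E] [IsTopologicalAddGroup E] [ContinuousSMul ℝ E]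
    [AddCommGroup F] [Module ℝ F] [TopologicalSpace F] [ContinuousSMul ℝ F] {C : Set E}
    (hC : Convex ℝ C) (h0 : 0 ∈ interior C) (f : F →ₗ[ℝ] E) :
    interior (f ⁻¹' C) ⊆ f ⁻¹' interior C := by
  intro y hy
  have hnhds : ∀ᶠ r : ℝ in 𝓝 1, r • y ∈ f ⁻¹' C :=
    (continuous_id.smul continuous_const).continuousAt.preimage_mem_nhds
      (by simpa using mem_interior_iff_mem_nhds.1 hy)
  obtain ⟨r, hrC, hr1⟩ :=
    ((hnhds.filter_mono nhdsWithin_le_nhds).and (self_mem_nhdsWithin (s := Ioi 1))).exists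
  have hr0 : r ≠ 0 := (zero_lt_one.trans hr1).ne'
  -- `f y` lies on the open segment from the interior point `0` to `f (r • y) ∈ C`
  have hcombo := hC.combo_interior_closure_mem_interior h0 (subset_closure hrC)
    (sub_pos.2 (inv_lt_one_of_one_lt₀ hr1)) (inv_nonneg.2 (zero_le_one.trans hr1.le))
    (sub_add_cancel 1 r⁻¹)
  simpa [smul_smul, hr0] using hcombo

theorem IsCompact.measure_preimage_prodMk_ne_top {α β : Type*} [TopologicalSpace α]
    [TopologicalSpace β] [MeasurableSpace β] (ν : Measure β) [IsFiniteMeasureOnCompacts ν]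
    {Q : Set (α × β)} (hQ : IsCompact Q) (x : α) : ν (Prod.mk x ⁻¹' Q) ≠ ∞ :=
  measure_ne_top_of_subset (fun _ ht => mem_image_of_mem Prod.snd ht)
    (hQ.image continuous_snd).measure_lt_top.ne

theorem lipschitzWith_volume_fiber_inter_Iic_mul {α : Type*} [TopologicalSpace α]
    {Q : Set (α × ℝ)} (hQc : IsCompact Q) (y : α) (c : ℝ) :
    LipschitzWith ‖c‖₊ fun ε : ℝ => (volume (Prod.mk y ⁻¹' Q ∩ Iic (ε * c))).toReal := by
  have hmul : LipschitzWith ‖c‖₊ fun ε : ℝ => ε * c := by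
    simpa only [smul_eq_mul, mul_comm] using lipschitzWith_smul (β := ℝ) c
  simpa only [one_mul, Function.comp_def] using
    (lipschitzWith_volume_inter_Iic (hQc.measure_preimage_prodMk_ne_top volume y)).comp hmul

section Fubini

variable {W : Type*} [MeasurableSpace W] (μ : Measure W) {Q : Set (W × ℝ)}
  {f : W → ℝ}

theorem measurable_volume_fiber_inter_Iic (hQ : MeasurableSet Q) (hf : Measurable f) :
    Measurable fun y => volume (Prod.mk y ⁻¹' Q ∩ Iic (f y)) :=
  measurable_measure_prodMk_left
    (hQ.inter (measurableSet_le measurable_snd (hf.comp measurable_fst)))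

theorem lintegral_volume_fiber_inter_Iic (hQ : MeasurableSet Q) (hf : Measurable f) :
    ∫⁻ y, volume (Prod.mk y ⁻¹' Q ∩ Iic (f y)) ∂μ = μ.prod volume {p | p ∈ Q ∧ p.2 ≤ f p.1} :=
  (Measure.prod_apply (hQ.inter (measurableSet_le measurable_snd (hf.comp measurable_fst)))).symm

theorem lintegral_volume_fiber_inter_Iic_ne_top (hQ : MeasurableSet Q)
    (hQfin : μ.prod volume Q ≠ ∞) (hf : Measurable f) :
    ∫⁻ y, volume (Prod.mk y ⁻¹' Q ∩ Iic (f y)) ∂μ ≠ ∞ := by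
  rw [lintegral_volume_fiber_inter_Iic μ hQ hf]
  exact measure_ne_top_of_subset (fun p hp => hp.1) hQfin

theorem integrable_volume_fiber_inter_Iic (hQ : MeasurableSet Q) (hQfin : μ.prod volume Q ≠ ∞)
    (hf : Measurable f) :
    Integrable (fun y => (volume (Prod.mk y ⁻¹' Q ∩ Iic (f y))).toReal) μ :=
  integrable_toReal_of_lintegral_ne_top (measurable_volume_fiber_inter_Iic hQ hf).aemeasurable
    (lintegral_volume_fiber_inter_Iic_ne_top μ hQ hQfin hf)

theorem integral_volume_fiber_inter_Iic (hQ : MeasurableSet Q) (hQfin : μ.prod volume Q ≠ ∞)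
    (hf : Measurable f) :
    ∫ y, (volume (Prod.mk y ⁻¹' Q ∩ Iic (f y))).toReal ∂μ =
      (μ.prod volume {p | p ∈ Q ∧ p.2 ≤ f p.1}).toReal := by
  have hmeas := measurable_volume_fiber_inter_Iic hQ hf
  rw [integral_toReal hmeas.aemeasurable
      (ae_lt_top hmeas (lintegral_volume_fiber_inter_Iic_ne_top μ hQ hQfin hf)),
    lintegral_volume_fiber_inter_Iic μ hQ hf]

end Fubini

section TiltedSubgraph

variable {W : Type*} [NormedAddCommGroup W] [NormedSpace ℝ W] {Q : Set (W × ℝ)}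

theorem hasDerivAt_volume_fiber_inter_Iic (hQc : IsCompact Q) (hQconv : Convex ℝ Q)
    (hQ0 : 0 ∈ interior Q) {y : W} (hy : y ∉ frontier {y | (y, 0) ∈ Q}) :
    HasDerivAt (fun s => (volume (Prod.mk y ⁻¹' Q ∩ Iic s)).toReal)
      ({y | (y, 0) ∈ Q}.indicator 1 y) 0 := by
  by_cases hyS : y ∈ interior {y | (y, 0) ∈ Q}
  · have hyQ : (y, (0 : ℝ)) ∈ interior Q :=
      hQconv.interior_preimage_subset_preimage_interior hQ0 (LinearMap.inl ℝ W ℝ) hyS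
    rw [indicator_of_mem (interior_subset hyS), Pi.one_apply]
    exact hasDerivAt_volume_inter_Iic_of_mem_nhds (hQc.measure_preimage_prodMk_ne_top volume y)
      ((Continuous.prodMk_right y).continuousAt.preimage_mem_nhds
        (mem_interior_iff_mem_nhds.1 hyQ))
  · have hyS' : y ∉ closure {y | (y, 0) ∈ Q} := fun h => hy ⟨h, hyS⟩
    rw [indicator_of_notMem (fun h => hyS' (subset_closure h))]
    exact hasDerivAt_volume_inter_Iic_of_compl_mem_nhds <|
      (hQc.isClosed.preimage (Continuous.prodMk_right y)).isOpen_compl.mem_nhds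
        fun h => hyS' (subset_closure h)

theorem hasDerivAt_measure_tiltedSubgraph [FiniteDimensional ℝ W] [MeasurableSpace W]
    [BorelSpace W] (μ : Measure W) [μ.IsAddHaarMeasure] (hQc : IsCompact Q)
    (hQconv : Convex ℝ Q) (hQ0 : 0 ∈ interior Q) {ℓ : W → ℝ} (hℓ : Continuous ℓ) :
    HasDerivAt (fun ε : ℝ => (μ.prod volume {p | p ∈ Q ∧ p.2 ≤ ε * ℓ p.1}).toReal)
      (∫ y in {y | (y, 0) ∈ Q}, ℓ y ∂μ) 0 := by
  set S := {y : W | (y, 0) ∈ Q}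
  set T := Prod.fst '' Q
  have hQm : MeasurableSet Q := hQc.isClosed.measurableSet
  have hSm : MeasurableSet S := (hQc.isClosed.preimage (Continuous.prodMk_left 0)).measurableSet
  have hQfin : μ.prod volume Q ≠ ∞ := hQc.measure_lt_top.ne
  have hTc : IsCompact T := hQc.image continuous_fst
  have hint (ε : ℝ) := integrable_volume_fiber_inter_Iic μ hQm hQfin (hℓ.measurable.const_mul ε)
  have hlip (y : W) : LipschitzWith (Real.nnabs (T.indicator (fun z => (‖ℓ z‖₊ : ℝ)) y))
      fun ε : ℝ => (volume (Prod.mk y ⁻¹' Q ∩ Iic (ε * ℓ y))).toReal := by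
    by_cases hy : y ∈ T
    · rw [indicator_of_mem hy, Real.nnabs_coe]
      exact lipschitzWith_volume_fiber_inter_Iic_mul hQc y (ℓ y)
    · have hempty : Prod.mk y ⁻¹' Q = ∅ :=
        eq_empty_of_forall_notMem fun t ht => hy ⟨(y, t), ht, rfl⟩
      simp only [hempty, empty_inter, measure_empty, ENNReal.toReal_zero]
      exact LipschitzWith.const' 0
  have hderiv : ∀ᵐ y ∂μ, HasDerivAt
      (fun ε : ℝ => (volume (Prod.mk y ⁻¹' Q ∩ Iic (ε * ℓ y))).toReal) (S.indicator ℓ y) 0 := by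
    filter_upwards [measure_eq_zero_iff_ae_notMem.1
      ((hQconv.linear_preimage (LinearMap.inl ℝ W ℝ)).addHaar_frontier μ)] with y hy
    refine ((hasDerivAt_volume_fiber_inter_Iic hQc hQconv hQ0 hy).comp_of_eq 0
      (hasDerivAt_mul_const (ℓ y)) (zero_mul _).symm).congr_deriv ?_
    by_cases hyS : y ∈ S <;> simp [S, hyS]
  obtain ⟨-, h⟩ := hasDerivAt_integral_of_dominated_loc_of_lip (μ := μ) (x₀ := (0 : ℝ))
    (F := fun ε y => (volume (Prod.mk y ⁻¹' Q ∩ Iic (ε * ℓ y))).toReal)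
    (bound := T.indicator fun z => (‖ℓ z‖₊ : ℝ)) univ_mem
    (Eventually.of_forall fun ε => (hint ε).aestronglyMeasurable) (hint 0)
    (hℓ.measurable.indicator hSm).aestronglyMeasurable
    (ae_of_all _ fun y => (hlip y).lipschitzOnWith)
    ((show Continuous fun z => (‖ℓ z‖₊ : ℝ) by fun_prop).continuousOn.integrableOn_compact hTc
      |>.integrable_indicator hTc.isClosed.measurableSet)
    hderiv
  have hvol : (fun ε : ℝ => (μ.prod volume {p | p ∈ Q ∧ p.2 ≤ ε * ℓ p.1}).toReal) =
      fun ε => ∫ y, (volume (Prod.mk y ⁻¹' Q ∩ Iic (ε * ℓ y))).toReal ∂μ :=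
    funext fun ε => (integral_volume_fiber_inter_Iic μ hQm hQfin (hℓ.measurable.const_mul ε)).symm
  rwa [hvol, ← integral_indicator hSm]

end TiltedSubgraph

theorem exists_measure_preimage_eq_smul {E F : Type*} [NormedAddCommGroup E] [NormedSpace ℝ E]
    [FiniteDimensional ℝ E] [MeasurableSpace E] [BorelSpace E] [NormedAddCommGroup F]
    [NormedSpace ℝ F] [FiniteDimensional ℝ F] [MeasurableSpace F] [BorelSpace F]
    (Ψ : F ≃L[ℝ] E) (ν : Measure F) [ν.IsAddHaarMeasure] (μ : Measure E) [μ.IsAddHaarMeasure] :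
    ∃ c : ℝ≥0, ∀ B, ν (Ψ ⁻¹' B) = c * μ B := by
  refine ⟨Measure.addHaarScalarFactor (ν.map Ψ) μ, fun B => ?_⟩
  have hmap := congrArg (· B) (Measure.isAddLeftInvariant_eq_smul (ν.map Ψ) μ)
  simp only [Measure.smul_apply, ENNReal.smul_def, smul_eq_mul] at hmap
  rw [← hmap]
  exact (Ψ.toHomeomorph.measurableEmbedding.map_apply ν B).symm

section Halfspace

variable {E : Type*} [NormedAddCommGroup E] [InnerProductSpace ℝ E] [MeasurableSpace E]

noncomputable def cutVolume (μ : Measure E) (K : Set E) (v : E) : ℝ :=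
  (μ (K ∩ {x | ⟪x, v⟫ ≤ 0})).toReal

theorem cutVolume_smul_of_pos (μ : Measure E) (K : Set E) (v : E) {c : ℝ} (hc : 0 < c) :
    cutVolume μ K (c • v) = cutVolume μ K v := by
  have hsign (x : E) : c * ⟪x, v⟫ ≤ 0 ↔ ⟪x, v⟫ ≤ 0 := by
    simpa using mul_le_mul_iff_of_pos_left (b := ⟪x, v⟫) (c := 0) hc
  simp only [cutVolume, real_inner_smul_right, hsign]

variable [FiniteDimensional ℝ E] [BorelSpace E]

theorem addHaar_setOf_inner_eq_zero (μ : Measure E) [μ.IsAddHaarMeasure] {v : E} (hv : v ≠ 0) :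
    μ {x | ⟪x, v⟫ = 0} = 0 := by
  have hker : {x | ⟪x, v⟫ = 0} = ((ℝ ∙ v)ᗮ : Set E) := by
    ext x
    exact Submodule.mem_orthogonal_singleton_iff_inner_left.symm
  rw [hker]
  exact Measure.addHaar_submodule μ _ <| by simpa [Submodule.orthogonal_eq_top_iff] using hv

theorem continuousAt_cutVolume (μ : Measure E) [μ.IsAddHaarMeasure] {K : Set E}
    (hK : MeasurableSet K) (hKfin : μ K ≠ ∞) {v : E} (hv : v ≠ 0) :
    ContinuousAt (cutVolume μ K) v := by
  have hhalf (w : E) : MeasurableSet (K ∩ {x | ⟪x, w⟫ ≤ 0}) :=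
    hK.inter (measurableSet_le (by fun_prop) measurable_const)
  refine (ENNReal.tendsto_toReal (measure_ne_top_of_subset inter_subset_left hKfin)).comp ?_
  refine tendsto_measure_of_ae_tendsto_indicator (𝓝 v) (hhalf v) hhalf hK hKfin
    (Eventually.of_forall fun _ => inter_subset_left) ?_
  -- off the null hyperplane `v^⊥`, the sign of `⟪x, w⟫` is locally constant in `w`
  filter_upwards [measure_eq_zero_iff_ae_notMem.1 (addHaar_setOf_inner_eq_zero μ hv)] with x hx
  have hcont : Tendsto (fun w => ⟪x, w⟫) (𝓝 v) (𝓝 ⟪x, v⟫) :=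
    (continuous_const.inner continuous_id).tendsto v
  rcases lt_or_gt_of_ne (hx : ⟪x, v⟫ ≠ 0) with hneg | hpos
  · filter_upwards [hcont.eventually_lt_const hneg] with w hw
    simp [hw.le, hneg.le]
  · filter_upwards [hcont.eventually_const_lt hpos] with w hw
    simp [not_le.2 hw, not_le.2 hpos]

theorem exists_forall_cutVolume_le [Nontrivial E] (μ : Measure E) [μ.IsAddHaarMeasure]
    {K : Set E} (hK : IsCompact K) :
    ∃ u : E, ‖u‖ = 1 ∧ ∀ v ≠ 0, cutVolume μ K v ≤ cutVolume μ K u := by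
  obtain ⟨u, hu, hmax⟩ := (isCompact_sphere (0 : E) 1).exists_isMaxOn
    (NormedSpace.sphere_nonempty.2 zero_le_one) fun w hw =>
      (continuousAt_cutVolume μ hK.isClosed.measurableSet hK.measure_lt_top.ne
        (ne_zero_of_mem_unit_sphere ⟨w, hw⟩)).continuousWithinAt
  refine ⟨u, mem_sphere_zero_iff_norm.1 hu, fun v hv => ?_⟩
  rw [← cutVolume_smul_of_pos μ K v (inv_pos.2 (norm_pos_iff.2 hv))]
  exact hmax (by simp [norm_smul, hv])

end Halfspace

section OrthogonalCoordinates

variable {E : Type*} [NormedAddCommGroup E] [InnerProductSpace ℝ E] [FiniteDimensional ℝ E]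

noncomputable def orthogonalProdSpanEquiv (u : E) (hu : u ≠ 0) : ((ℝ ∙ u)ᗮ × ℝ) ≃L[ℝ] E :=
  (((LinearEquiv.refl ℝ (ℝ ∙ u)ᗮ).prodCongr (LinearEquiv.toSpanNonzeroSingleton ℝ E u hu)).trans
    (Submodule.prodEquivOfIsCompl _ _ (ℝ ∙ u).isCompl_orthogonal.symm)).toContinuousLinearEquiv

@[simp]
theorem orthogonalProdSpanEquiv_apply {u : E} (hu : u ≠ 0) (y : (ℝ ∙ u)ᗮ) (t : ℝ) :
    orthogonalProdSpanEquiv u hu (y, t) = y + t • u :=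
  rfl

theorem inner_orthogonalProdSpanEquiv_sub_smul {u : E} (hu : u ≠ 0) (y a : (ℝ ∙ u)ᗮ)
    (t ε : ℝ) :
    ⟪orthogonalProdSpanEquiv u hu (y, t), u - ε • a⟫ = t * ‖u‖ ^ 2 - ε * ⟪a, y⟫ := by
  have hy : ⟪(y : E), u⟫ = 0 := Submodule.mem_orthogonal_singleton_iff_inner_left.1 y.2
  have ha : ⟪u, (a : E)⟫ = 0 := Submodule.mem_orthogonal_singleton_iff_inner_right.1 a.2
  simp only [orthogonalProdSpanEquiv_apply, inner_add_left, inner_sub_right, inner_smul_right,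
    real_inner_smul_left, hy, ha, real_inner_self_eq_norm_sq, Submodule.coe_inner]
  rw [real_inner_comm]
  ring

end OrthogonalCoordinates

theorem exists_centroidIn_inter_orthogonal_eq_zero {E : Type*} [NormedAddCommGroup E]
    [InnerProductSpace ℝ E] [FiniteDimensional ℝ E] [MeasurableSpace E] [BorelSpace E]
    [Nontrivial E] {K : Set E} (hKc : IsCompact K) (hKconv : Convex ℝ K)
    (hK0 : 0 ∈ interior K) :
    ∃ u : E, u ≠ 0 ∧ centroidIn (Subtype.val ⁻¹' K : Set (ℝ ∙ u)ᗮ) = 0 := by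
  let μ : Measure E := Measure.addHaar
  obtain ⟨u, hu1, hmax⟩ := exists_forall_cutVolume_le μ hKc
  have hu : u ≠ 0 := norm_ne_zero_iff.1 (by simp [hu1])
  set Ψ := orthogonalProdSpanEquiv u hu
  obtain ⟨c, hc⟩ := exists_measure_preimage_eq_smul Ψ (volume.prod volume) μ
  set Q := Ψ ⁻¹' K
  have hQc : IsCompact Q := Ψ.toHomeomorph.isCompact_preimage.2 hKc
  have hQconv : Convex ℝ Q := hKconv.linear_preimage (Ψ : ((ℝ ∙ u)ᗮ × ℝ) →ₗ[ℝ] E)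
  have hQ0 : 0 ∈ interior Q :=
    (Ψ.toHomeomorph.preimage_interior K).subset (by simpa using hK0)
  have hslice : {y | (y, 0) ∈ Q} = (Subtype.val ⁻¹' K : Set (ℝ ∙ u)ᗮ) := by
    ext y
    simp [Q, Ψ]
  have hL : IsCompact (Subtype.val ⁻¹' K : Set (ℝ ∙ u)ᗮ) :=
    Submodule.isClosed_orthogonal _ |>.isClosedEmbedding_subtypeVal.isCompact_preimage hKc
  refine ⟨u, hu, ?_⟩
  rw [centroidIn, integral_eq_zero_of_forall_integral_inner_eq_zero ℝ (fun y => y)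
    (continuousOn_id.integrableOn_compact hL) fun a => ?_, smul_zero]
  have htilt (ε : ℝ) : Ψ ⁻¹' (K ∩ {x | ⟪x, u - ε • (a : E)⟫ ≤ 0}) =
      {p | p ∈ Q ∧ p.2 ≤ ε * ⟪a, p.1⟫} := by
    ext ⟨y, t⟩
    simp only [Q, Ψ, mem_preimage, mem_inter_iff, mem_ofPred_eq,
      inner_orthogonalProdSpanEquiv_sub_smul, hu1, one_pow, mul_one, sub_nonpos]
  have hcut : (fun ε : ℝ => ((volume.prod volume) {p | p ∈ Q ∧ p.2 ≤ ε * ⟪a, p.1⟫}).toReal) =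
      fun ε => c * cutVolume μ K (u - ε • (a : E)) := by
    funext ε
    rw [← htilt, hc, ENNReal.toReal_mul, cutVolume, ENNReal.coe_toReal]
  have hderiv := hasDerivAt_measure_tiltedSubgraph volume hQc hQconv hQ0
    (ℓ := fun y => ⟪a, y⟫) (by fun_prop)
  rw [hcut, hslice] at hderiv
  refine IsLocalMax.hasDerivAt_eq_zero (Eventually.of_forall fun ε => ?_) hderiv
  have hne : u - ε • (a : E) ≠ 0 := fun h => by
    simpa [Ψ, h, hu1] using inner_orthogonalProdSpanEquiv_sub_smul hu 0 a 1 ε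
  simpa using mul_le_mul_of_nonneg_left (hmax _ hne) c.2

theorem stmt12 (n : ℕ) (hn : 2 ≤ n) (K : Set (EuclideanSpace ℝ (Fin n)))
    (hKcomp : IsCompact K) (hKconv : Convex ℝ K) (hKint : 0 ∈ interior K) :
    ∃ H : Submodule ℝ (EuclideanSpace ℝ (Fin n)),
      Module.finrank ℝ H = n - 1 ∧
      centroidIn (Subtype.val ⁻¹' K : Set H) = 0 := by
  have hdim : Module.finrank ℝ (EuclideanSpace ℝ (Fin n)) = n - 1 + 1 := by
    rw [finrank_euclideanSpace_fin]
    omega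
  have : Nontrivial (EuclideanSpace ℝ (Fin n)) := Module.nontrivial_of_finrank_eq_succ hdim
  have : Fact (Module.finrank ℝ (EuclideanSpace ℝ (Fin n)) = n - 1 + 1) := ⟨hdim⟩
  obtain ⟨u, hu, hcent⟩ := exists_centroidIn_inter_orthogonal_eq_zero hKcomp hKconv hKint
  exact ⟨(ℝ ∙ u)ᗮ, Submodule.finrank_orthogonal_span_singleton hu, hcent⟩
end

section
/- Let K ⊆ ℝⁿ be a nonempty compact convex set, let ε > 0 and z ∈ ℝⁿ, and suppose K ⊆ (1 + ε)·K + z. Then −z/ε ∈ K; equivalently, −z ∈ ε·K. -/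
open Set Pointwise

theorem stmt15 {n : ℕ} (K : Set (EuclideanSpace ℝ (Fin n)))
    (hne : K.Nonempty) (hKcomp : IsCompact K) (hKconv : Convex ℝ K)
    (ε : ℝ) (hε : 0 < ε) (z : EuclideanSpace ℝ (Fin n))
    (h : K ⊆ (1 + ε) • K + {z}) :
    -(ε⁻¹ • z) ∈ K ∧ -z ∈ ε • K := by
  obtain ⟨x₀, hx₀⟩ := hne
  set p : EuclideanSpace ℝ (Fin n) := -(ε⁻¹ • z) with hp
  set c : ℝ := (1 + ε)⁻¹ with hc
  have h1ε : (0:ℝ) < 1 + ε := by linarith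
  have hεp : ε • p = -z := by
    rw [hp, smul_neg, smul_smul, mul_inv_cancel₀ hε.ne', one_smul]
  have hpz : p - z = (1 + ε) • p := by
    have : (1 + ε) • p = p + ε • p := by rw [add_smul, one_smul]
    rw [this, hεp]; abel
  -- the sequence b k = p + c^k • (x₀ - p) stays in K
  set b : ℕ → EuclideanSpace ℝ (Fin n) := fun k => p + c ^ k • (x₀ - p) with hb
  have hbK : ∀ k, b k ∈ K := by
    intro k
    induction k with
    | zero => simpa [hb] using hx₀
    | succ k ih =>
      obtain ⟨y, hy, w, hw, hyw⟩ := h ih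
      rcases hy with ⟨u, hu, rfl⟩
      rw [Set.mem_singleton_iff] at hw
      rw [hw] at hyw
      clear hw
      have hyeq : u = b (k + 1) := by
        have : b k = (1 + ε) • u + z := hyw.symm
        have h2 : c • (b k - z) = u := by
          rw [this]
          rw [add_sub_cancel_right, smul_smul, hc, inv_mul_cancel₀ h1ε.ne', one_smul]
        rw [← h2, hb]
        simp only
        have : (p + c ^ k • (x₀ - p)) - z = (p - z) + c ^ k • (x₀ - p) := by abel
        rw [this, hpz, smul_add, smul_smul, smul_smul, hc,
          inv_mul_cancel₀ h1ε.ne', one_smul, pow_succ, mul_comm]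
      rw [← hyeq]; exact hu
  have hc1 : |c| < 1 := by
    rw [abs_of_pos (inv_pos.mpr h1ε)]
    rw [inv_lt_one_iff₀]; right; linarith
  have htend : Filter.Tendsto b Filter.atTop (nhds p) := by
    have h0 : Filter.Tendsto (fun k => c ^ k) Filter.atTop (nhds 0) :=
      tendsto_pow_atTop_nhds_zero_of_abs_lt_one hc1
    have : Filter.Tendsto (fun k => c ^ k • (x₀ - p)) Filter.atTop
        (nhds ((0:ℝ) • (x₀ - p))) := h0.smul_const _
    simpa using (tendsto_const_nhds.add this)
  have hpK : p ∈ K := hKcomp.isClosed.mem_of_tendsto htend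
    (Filter.Eventually.of_forall hbK)
  exact ⟨hpK, ⟨p, hpK, hεp⟩⟩
end

section
/- Let n ≥ 1, let K, L ⊆ ℝⁿ be convex bodies with cent(K) = 0 and K ⊆ b·Bⁿ for some b > 0, where Bⁿ is the closed Euclidean unit ball. Suppose 0 < ε < 1/(n+1) and there exists z ∈ ℝⁿ with K ⊆ L ⊆ (1 + ε)·K + z. Then |cent(L)| ≤ 4·n·b·ε. -/
open Set Metric Pointwise MeasureTheory

theorem one_sub_mul_le_inv_one_add_pow {ε : ℝ} (hε : 0 ≤ ε) (n : ℕ) :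
    1 - n * ε ≤ ((1 + ε) ^ n)⁻¹ := by
  have hε1 : 0 < 1 + ε := by linarith
  have hinv : (1 + ε)⁻¹ = 1 + -(ε / (1 + ε)) := by field_simp; ring
  have hfrac : ε / (1 + ε) ≤ ε := div_le_self hε (by linarith)
  have hfrac1 : ε / (1 + ε) ≤ 1 := (div_le_one hε1).2 (by linarith)
  calc 1 - n * ε ≤ 1 + n * -(ε / (1 + ε)) := by
        nlinarith [mul_le_mul_of_nonneg_left hfrac (Nat.cast_nonneg (α := ℝ) n)]
    _ ≤ (1 + -(ε / (1 + ε))) ^ n := one_add_mul_le_pow (by linarith) n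
    _ = ((1 + ε) ^ n)⁻¹ := by rw [← hinv, inv_pow]

theorem one_sub_div_le_of_le_one_add_pow_mul {a b ε : ℝ} (hb : 0 < b) (hε : 0 ≤ ε) {n : ℕ}
    (hba : b ≤ (1 + ε) ^ n * a) : 1 - a / b ≤ n * ε := by
  have hpow : 0 < (1 + ε) ^ n := by positivity
  have : ((1 + ε) ^ n)⁻¹ ≤ a / b := by
    rw [le_div_iff₀ hb, inv_mul_le_iff₀ hpow]; exact hba
  linarith [one_sub_mul_le_inv_one_add_pow hε n]

theorem addHaar_smul_add_singleton {E : Type*} [NormedAddCommGroup E] [NormedSpace ℝ E]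
    [MeasurableSpace E] [BorelSpace E] [FiniteDimensional ℝ E] (μ : Measure E)
    [μ.IsAddHaarMeasure] {t : ℝ} (ht : 0 ≤ t) (s : Set E) (z : E) :
    μ (t • s + {z}) = ENNReal.ofReal (t ^ Module.finrank ℝ E) * μ s := by
  rw [add_singleton, image_add_right, measure_preimage_add_right,
    Measure.addHaar_smul_of_nonneg μ ht]

theorem subset_closedBall_of_subset_smul_add_singleton {E : Type*} [SeminormedAddCommGroup E]
    [NormedSpace ℝ E] {K L : Set E} {b t : ℝ} {z : E} (hKb : K ⊆ closedBall 0 b) (ht : 0 ≤ t)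
    (hL0 : (0 : E) ∈ L) (hL : L ⊆ t • K + {z}) : L ⊆ closedBall 0 (2 * t * b) := by
  rw [add_singleton] at hL
  obtain ⟨_, ⟨k₀, hk₀, rfl⟩, hz⟩ := hL hL0
  rintro _ hx
  obtain ⟨_, ⟨k, hk, rfl⟩, rfl⟩ := hL hx
  beta_reduce at hz ⊢
  have hx : t • k + z = t • (k - k₀) := by
    rw [smul_sub, eq_neg_of_add_eq_zero_right hz, sub_eq_add_neg]
  have hk := mem_closedBall_zero_iff.1 (hKb hk)
  have hk₀ := mem_closedBall_zero_iff.1 (hKb hk₀)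
  rw [mem_closedBall_zero_iff, hx, norm_smul, Real.norm_of_nonneg ht]
  calc t * ‖k - k₀‖ ≤ t * (b + b) := by gcongr; exact (norm_sub_le k k₀).trans (by linarith)
    _ = 2 * t * b := by ring

theorem centroid_eq_setAverage {n : ℕ} (K : Set (EuclideanSpace ℝ (Fin n))) :
    centroid K = ⨍ x in K, x := by
  rw [setAverage_eq]; rfl

theorem centroid_mem {n : ℕ} {K : Set (EuclideanSpace ℝ (Fin n))} (hK : IsCompact K)
    (hKconv : Convex ℝ K) (hK0 : volume K ≠ 0) : centroid K ∈ K := by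
  rw [centroid_eq_setAverage]
  exact hKconv.set_average_mem hK.isClosed hK0 hK.measure_lt_top.ne
    (ae_restrict_mem hK.isClosed.measurableSet)
    (continuous_id'.continuousOn.integrableOn_compact hK)

theorem setIntegral_id_eq_zero_of_centroid_eq_zero {n : ℕ} {K : Set (EuclideanSpace ℝ (Fin n))}
    (hK0 : volume K ≠ 0) (hKtop : volume K ≠ ⊤) (hK : centroid K = 0) : ∫ x in K, x = 0 := by
  rw [centroid, smul_eq_zero] at hK
  exact hK.resolve_left (inv_ne_zero (ENNReal.toReal_ne_zero.2 ⟨hK0, hKtop⟩))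

theorem norm_centroid_le_of_subset {n : ℕ} {K L : Set (EuclideanSpace ℝ (Fin n))}
    (hKm : MeasurableSet K) (hL : IsCompact L) (hKL : K ⊆ L) (hK0 : volume K ≠ 0)
    (hKcent : centroid K = 0) {R : ℝ} (hLR : L ⊆ closedBall 0 R) :
    ‖centroid L‖ ≤ R * (1 - volume.real K / volume.real L) := by
  have hLtop : volume L ≠ ⊤ := hL.measure_lt_top.ne
  have hKtop : volume K ≠ ⊤ := ne_top_of_le_ne_top hLtop (measure_mono hKL)
  have hvK : 0 < volume.real K := ENNReal.toReal_pos hK0 hKtop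
  have hvL : 0 < volume.real L := hvK.trans_le (measureReal_mono hKL hLtop)
  have hint : ∫ x in L, x = ∫ x in L \ K, x := by
    rw [setIntegral_sdiff hKm (continuous_id'.continuousOn.integrableOn_compact hL) hKL,
      setIntegral_id_eq_zero_of_centroid_eq_zero hK0 hKtop hKcent, sub_zero]
  have hbound : ‖∫ x in L \ K, x‖ ≤ R * (volume.real L - volume.real K) := by
    rw [← measureReal_sdiff hKL hKm hLtop]
    exact norm_setIntegral_le_of_norm_le_const
      ((measure_mono sdiff_subset).trans_lt hL.measure_lt_top)
      fun x hx => mem_closedBall_zero_iff.1 (hLR hx.1)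
  calc ‖centroid L‖ = (volume.real L)⁻¹ * ‖∫ x in L \ K, x‖ := by
        rw [centroid, ← measureReal_def, norm_smul, hint, Real.norm_of_nonneg (inv_nonneg.2 hvL.le)]
    _ ≤ (volume.real L)⁻¹ * (R * (volume.real L - volume.real K)) := by gcongr
    _ = R * (1 - volume.real K / volume.real L) := by field_simp

theorem stmt17_general {n : ℕ} (K L : Set (EuclideanSpace ℝ (Fin n)))
    (hKcomp : IsCompact K) (hKconv : Convex ℝ K) (hKint : (interior K).Nonempty)
    (hLcomp : IsCompact L)
    (hKcent : centroid K = 0)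
    (b : ℝ) (hb : 0 < b) (hKb : K ⊆ b • closedBall (0 : EuclideanSpace ℝ (Fin n)) 1)
    (ε : ℝ) (hε0 : 0 < ε) (hε1 : ε < 1 / ((n : ℝ) + 1))
    (h : ∃ z : EuclideanSpace ℝ (Fin n), K ⊆ L ∧ L ⊆ (1 + ε) • K + {z}) :
    ‖centroid L‖ ≤ 4 * n * b * ε := by
  obtain ⟨z, hKL, hLz⟩ := h
  have hK0 : volume K ≠ 0 := (Measure.measure_pos_of_nonempty_interior _ hKint).ne'
  have hε : ε ≤ 1 := hε1.le.trans (div_le_one_of_le₀ (by simp) (by positivity))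
  have h0K : (0 : EuclideanSpace ℝ (Fin n)) ∈ K := hKcent ▸ centroid_mem hKcomp hKconv hK0
  rw [smul_unitClosedBall_of_nonneg hb.le] at hKb
  have hLR := subset_closedBall_of_subset_smul_add_singleton hKb (by linarith) (hKL h0K) hLz
  have hvol : volume.real L ≤ (1 + ε) ^ n * volume.real K := by
    calc volume.real L ≤ volume.real ((1 + ε) • K + {z}) :=
          measureReal_mono hLz ((hKcomp.smul _).add isCompact_singleton).measure_lt_top.ne
      _ = (1 + ε) ^ n * volume.real K := by
        rw [measureReal_def, addHaar_smul_add_singleton _ (by linarith), finrank_euclideanSpace_fin,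
          ENNReal.toReal_mul, ENNReal.toReal_ofReal (by positivity), measureReal_def]
  have hvL : 0 < volume.real L :=
    (ENNReal.toReal_pos hK0 hKcomp.measure_lt_top.ne).trans_le
      (measureReal_mono hKL hLcomp.measure_lt_top.ne)
  calc ‖centroid L‖ ≤ 2 * (1 + ε) * b * (1 - volume.real K / volume.real L) :=
        norm_centroid_le_of_subset hKcomp.isClosed.measurableSet hLcomp hKL hK0 hKcent hLR
    _ ≤ 2 * (1 + ε) * b * (n * ε) := by
        gcongr; exact one_sub_div_le_of_le_one_add_pow_mul hvL hε0.le hvol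
    _ ≤ 4 * n * b * ε := by
        have : 0 ≤ n * b * ε := by positivity
        nlinarith

theorem stmt17 {n : ℕ} (hn : 1 ≤ n) (K L : Set (EuclideanSpace ℝ (Fin n)))
    (hKcomp : IsCompact K) (hKconv : Convex ℝ K) (hKint : (interior K).Nonempty)
    (hLcomp : IsCompact L) (hLconv : Convex ℝ L) (hLint : (interior L).Nonempty)
    (hKcent : centroid K = 0)
    (b : ℝ) (hb : 0 < b) (hKb : K ⊆ b • closedBall (0 : EuclideanSpace ℝ (Fin n)) 1)
    (ε : ℝ) (hε0 : 0 < ε) (hε1 : ε < 1 / ((n : ℝ) + 1))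
    (h : ∃ z : EuclideanSpace ℝ (Fin n), K ⊆ L ∧ L ⊆ (1 + ε) • K + {z}) :
    ‖centroid L‖ ≤ 4 * n * b * ε :=
  stmt17_general K L hKcomp hKconv hKint hLcomp hKcent b hb hKb ε hε0 hε1 h
end
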